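/- Let B be an integral domain that is a finitely generated ℂ-algebra, let B₀ ⊆ B be a ℂ-subalgebra, and let f ∈ B₀ be a nonzero element such that B[f^{-1}] = B₀[f^{-1}], i.e. for every b ∈ B there is m ≥ 0 with f^m·b ∈ B₀. Given any sequence ℓ₀, ℓ₁, ℓ₂, … of positive integers, define inductively B_{i+1} to be the subring of B generated by B_i and {b ∈ B : f^{ℓ_i}·b ∈ B_i}. Then there exists a natural number ν such that B_ν = B. -/
import Mathlib


/-- Let `B` be a finitely generated ℂ-algebra domain, `B₀ ⊆ B` a
ℂ-subalgebra and `f ∈ B₀` nonzero with `B[f⁻¹] = B₀[f⁻¹]` (every `b ∈ B` satisfies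
`f^m·b ∈ B₀` for some `m`).  For any sequence `ℓ₀, ℓ₁, …` of positive integers define
inductively `B_{i+1}` as the subring of `B` generated by `B_i` and
`{b ∈ B : f^{ℓ_i}·b ∈ B_i}` (an affine modification).  Then `B_ν = B` for some `ν`. -/
theorem stmt8
    (B : Type) [CommRing B] [IsDomain B] [Algebra ℂ B] [Algebra.FiniteType ℂ B]
    (B₀ : Subalgebra ℂ B) (f : B) (hf : f ∈ B₀) (hf0 : f ≠ 0)
    (hloc : ∀ b : B, ∃ m : ℕ, f ^ m * b ∈ B₀)
    (ℓ : ℕ → ℕ) (hℓ : ∀ i, 0 < ℓ i)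
    (Bs : ℕ → Subalgebra ℂ B) (hBs0 : Bs 0 = B₀)
    (hstep : ∀ i : ℕ,
      Bs (i + 1) = Algebra.adjoin ℂ ((Bs i : Set B) ∪ {b : B | f ^ ℓ i * b ∈ Bs i})) :
    ∃ ν : ℕ, Bs ν = ⊤ := by
  -- monotonicity of the chain
  have hmono : ∀ i, Bs i ≤ Bs (i + 1) := by
    intro i x hx
    rw [hstep i]
    exact Algebra.subset_adjoin (Or.inl hx)
  have hmono' : ∀ {i j}, i ≤ j → Bs i ≤ Bs j := by
    intro i j hij
    induction hij with
    | refl => exact le_rfl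
    | step h ih => exact le_trans ih (hmono _)
  -- f is in every Bs i
  have hfBs : ∀ i, f ∈ Bs i := by
    intro i
    exact hmono' (Nat.zero_le i) (hBs0 ▸ hf)
  -- key lemma: if f^m * b ∈ Bs k then b ∈ Bs (k + m)
  have key : ∀ (m : ℕ) (b : B) (k : ℕ), f ^ m * b ∈ Bs k → b ∈ Bs (k + m) := by
    intro m
    induction m with
    | zero => intro b k h; simpa using h
    | succ m ih =>
      intro b k h
      have hfb : f * b ∈ Bs (k + m) := by
        apply ih (f * b) k
        have : f ^ m * (f * b) = f ^ (m + 1) * b := by ring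
        rwa [this]
      have hb : f ^ ℓ (k + m) * b ∈ Bs (k + m) := by
        have hpos := hℓ (k + m)
        have : f ^ ℓ (k + m) * b = f ^ (ℓ (k + m) - 1) * (f * b) := by
          rw [← mul_assoc, ← pow_succ, Nat.sub_add_cancel hpos]
        rw [this]
        exact mul_mem (pow_mem (hfBs _) _) hfb
      rw [show k + (m + 1) = (k + m) + 1 by ring, hstep (k + m)]
      exact Algebra.subset_adjoin (Or.inr hb)
  -- finite generation
  obtain ⟨s, hs⟩ := Algebra.FiniteType.out (R := ℂ) (A := B)
  choose m hm using hloc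
  obtain ⟨N, hN⟩ : ∃ N, ∀ x ∈ s, m x ≤ N :=
    ⟨s.sup m, fun x hx => Finset.le_sup hx⟩
  refine ⟨N, top_le_iff.mp ?_⟩
  rw [← hs]
  apply Algebra.adjoin_le
  intro x hx
  have : x ∈ Bs (0 + m x) := key (m x) x 0 (by rw [hBs0]; exact hm x)
  exact hmono' (by simpa using hN x hx) this
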